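/- Let n ≥ 6 and let X = X(m,Y) be the (n+2)×(n+2) complex matrix with block form [[0,A,Y],[0,0,B],[0,0,0]] (blocks of sizes 4, n−6, 4), where Y is an antisymmetric 4×4 matrix, A is the 4×(n−6) matrix whose first row is (m₁,…,m_{n−6}) and whose other rows are zero, and B is the (n−6)×4 matrix whose first column is (−m₁,…,−m_{n−6}) and whose other columns are zero. Then X³ = 0, X² = −(m₁²+⋯+m_{n−6}²)·E₍₁,ₙ₋₁₎ where E₍₁,ₙ₋₁₎ is the matrix unit with a single 1 in row 1 and column n−1 (1-indexed), exp(X) = I + X + (1/2)X², and for every v ∈ ℂ^{n+2} the last four coordinates of exp(X)·v equal the last four coordinates of v. -/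

import Mathlib

open NormedSpace

/-- The index type for `(n+2)×(n+2)` matrices in block form with blocks of sizes
`4`, `n − 6`, `4`. -/
abbrev Idx (n : ℕ) : Type := Fin 4 ⊕ (Fin (n - 6) ⊕ Fin 4)

/-- The matrix `X(m,Y)` with block form `[[0,A,Y],[0,0,B],[0,0,0]]`, where the first row
of `A` is `(m₁,…,m_{n−6})` and the other rows are zero, and the first column of `B` is
`(−m₁,…,−m_{n−6})` and the other columns are zero. -/
def Xmat (n : ℕ) (m : Fin (n - 6) → ℂ) (Y : Matrix (Fin 4) (Fin 4) ℂ) :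
    Matrix (Idx n) (Idx n) ℂ := fun i j =>
  match i, j with
  | .inl i, .inr (.inl j) => if (i : ℕ) = 0 then m j else 0
  | .inl i, .inr (.inr j) => Y i j
  | .inr (.inl i), .inr (.inr j) => if (j : ℕ) = 0 then -(m i) else 0
  | _, _ => 0

/-- The matrix unit `E₍₁,ₙ₋₁₎`: a single `1` in row 1 and column `n−1` (1-indexed), i.e.
in the first row of the first block and the first column of the last block. -/
def Ematrix (n : ℕ) : Matrix (Idx n) (Idx n) ℂ :=
  Matrix.single (Sum.inl 0) (Sum.inr (Sum.inr 0)) 1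

/-!
The only nonzero block of `X²` is `A B = -(Σ mᵢ²) E` in the top-right corner, and the last four
rows of `X` vanish, so `E X = 0` and hence `X³ = 0`. The exponential series therefore stops
after `½ X²`, and since every power `Xᵏ` with `k ≥ 1` has zero last rows, `exp X` acts as the
identity on the last four coordinates.
-/

namespace NormedSpace

variable {𝕂 𝔸 : Type*} [Field 𝕂] [CharZero 𝕂] [Ring 𝔸] [Algebra 𝕂 𝔸] [TopologicalSpace 𝔸]
  [IsTopologicalRing 𝔸]

theorem exp_eq_sum_range_of_pow_eq_zero {x : 𝔸} {k : ℕ} (h : x ^ k = 0) :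
    exp x = ∑ i ∈ Finset.range k, (i.factorial : 𝕂)⁻¹ • x ^ i := by
  rw [exp_eq_tsum 𝕂]
  refine tsum_eq_sum fun i hi => ?_
  rw [pow_eq_zero_of_le (by simpa using hi) h, smul_zero]

variable (𝕂) in
theorem exp_eq_of_pow_three_eq_zero {x : 𝔸} (h : x ^ 3 = 0) :
    exp x = 1 + x + ((1 : 𝕂) / 2) • x ^ 2 := by
  simp [exp_eq_sum_range_of_pow_eq_zero (𝕂 := 𝕂) h, Finset.sum_range_succ, Nat.factorial]

end NormedSpace

open Matrix

theorem Matrix.one_add_add_smul_sq_mulVec_apply_of_row_eq_zero {ι R : Type*} [Fintype ι]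
    [DecidableEq ι] [CommRing R] {M : Matrix ι ι R} {i : ι} (h : M i = 0) (c : R)
    (v : ι → R) : ((1 + M + c • M ^ 2) *ᵥ v) i = v i := by
  have hM : ∀ w, (M *ᵥ w) i = 0 := fun w => by simp [mulVec, h]
  simp [add_mulVec, smul_mulVec, sq, ← mulVec_mulVec, hM]

section Xmat

variable {n : ℕ} (m : Fin (n - 6) → ℂ) (Y : Matrix (Fin 4) (Fin 4) ℂ)

theorem Xmat_inr_inr (j : Fin 4) : Xmat n m Y (.inr (.inr j)) = 0 := by
  ext (k | k | k) <;> rfl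

theorem Xmat_sq : Xmat n m Y ^ 2 = (-(∑ i, m i ^ 2)) • Ematrix n := by
  ext (i | i | i) (j | j | j) <;>
    simp [sq, mul_apply, Fintype.sum_sum_type, Xmat, Ematrix, single]
  grind

theorem Ematrix_mul_Xmat : Ematrix n * Xmat n m Y = 0 := by
  simp [Ematrix, single_mul_eq_updateRow_zero, row, Xmat_inr_inr]

theorem Xmat_pow_three : Xmat n m Y ^ 3 = 0 := by
  rw [pow_succ, Xmat_sq, smul_mul, Ematrix_mul_Xmat, smul_zero]

end Xmat

theorem stmt18_general (n : ℕ) (m : Fin (n - 6) → ℂ)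
    (Y : Matrix (Fin 4) (Fin 4) ℂ) :
    Xmat n m Y ^ 3 = 0 ∧
    Xmat n m Y ^ 2 = (-(∑ i, m i ^ 2)) • Ematrix n ∧
    exp (Xmat n m Y) = 1 + Xmat n m Y + ((1 : ℂ) / 2) • Xmat n m Y ^ 2 ∧
    ∀ (v : Idx n → ℂ) (j : Fin 4),
      (exp (Xmat n m Y)).mulVec v (Sum.inr (Sum.inr j)) = v (Sum.inr (Sum.inr j)) := by
  have hexp := exp_eq_of_pow_three_eq_zero ℂ (Xmat_pow_three m Y)
  refine ⟨Xmat_pow_three m Y, Xmat_sq m Y, hexp, fun v j => ?_⟩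
  rw [hexp]
  exact one_add_add_smul_sq_mulVec_apply_of_row_eq_zero (Xmat_inr_inr m Y j) _ v

/-- For `n ≥ 6` and `Y` antisymmetric: `X³ = 0`, `X² = −(Σ mᵢ²)·E₍₁,ₙ₋₁₎`,
`exp X = I + X + ½X²`, and `exp X · v` has the same last four coordinates as `v`. -/
theorem stmt18 (n : ℕ) (hn : 6 ≤ n) (m : Fin (n - 6) → ℂ)
    (Y : Matrix (Fin 4) (Fin 4) ℂ) (hY : Y.transpose = -Y) :
    Xmat n m Y ^ 3 = 0 ∧
    Xmat n m Y ^ 2 = (-(∑ i, m i ^ 2)) • Ematrix n ∧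
    exp (Xmat n m Y) = 1 + Xmat n m Y + ((1 : ℂ) / 2) • Xmat n m Y ^ 2 ∧
    ∀ (v : Idx n → ℂ) (j : Fin 4),
      (exp (Xmat n m Y)).mulVec v (Sum.inr (Sum.inr j)) = v (Sum.inr (Sum.inr j)) :=
  stmt18_general n m Y
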